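/- Let b ≥ 1, n ≥ 1, m ≥ 0 be integers, τ ∈ ℂ with Im τ > 0, and fix w ∈ ℂᵐ. Then the b functions ℂⁿ → ℂ given by z ↦ S_l(z | w) for l = 0, 1, …, b−1 are linearly independent over ℂ. -/

import Mathlib

open Complex BigOperators Finset

/-- The theta function with characteristics `a, b`. -/
noncomputable def thetaChar (a b : ℝ) (z τ : ℂ) : ℂ :=
  ∑' n : ℤ, Complex.exp (Real.pi * Complex.I * ((n : ℂ) + a) ^ 2 * τ +
    2 * Real.pi * Complex.I * ((n : ℂ) + a) * (z + b))

/-- The first Jacobi theta function `θ₁(z,τ) = θ[1/2,1/2](z,τ)`. -/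
noncomputable def theta1 (z τ : ℂ) : ℂ := thetaChar (1/2) (1/2) z τ

/-- The genus-one Laughlin section with `n` particles and `m` quasiholes:
`S_l(z|w) = θ[l/b,0](b Σ z_μ + Σ w_γ, bτ) · Π_{μ<ν} θ₁(z_μ−z_ν,τ)^b · Π_{μ,γ} θ₁(z_μ−w_γ,τ)`. -/
noncomputable def laughlinS (b n m : ℕ) (l : ℕ) (τ : ℂ)
    (z : Fin n → ℂ) (w : Fin m → ℂ) : ℂ :=
  thetaChar ((l : ℝ) / (b : ℝ)) 0 ((b : ℂ) * ∑ μ, z μ + ∑ γ, w γ) ((b : ℂ) * τ) *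
    (∏ μ : Fin n, ∏ ν ∈ Finset.Ioi μ, (theta1 (z μ - z ν) τ) ^ b) *
    ∏ μ : Fin n, ∏ γ : Fin m, theta1 (z μ - w γ) τ

section Auxiliary

open Real MeasureTheory

/-- `thetaChar` in terms of `jacobiTheta₂`. -/
lemma thetaChar_eq_jacobiTheta₂ (a c : ℝ) (z τ : ℂ) :
    thetaChar a c z τ = Complex.exp (π * I * a ^ 2 * τ + 2 * π * I * a * (z + c)) *
      jacobiTheta₂ (z + c + a * τ) τ := by
  rw [thetaChar, jacobiTheta₂, ← tsum_mul_left]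
  refine tsum_congr fun n => ?_
  rw [jacobiTheta₂_term, ← Complex.exp_add]
  congr 1
  ring

/-- The integral of `jacobiTheta₂` over a horizontal period is `1`. -/
lemma jacobiTheta₂_integral {τ : ℂ} (hτ : 0 < τ.im) :
    ∫ s in Set.Ioc (0:ℝ) 1, jacobiTheta₂ (s : ℂ) τ = 1 := by
  have hmeas : ∀ n : ℤ, AEStronglyMeasurable (fun s : ℝ => jacobiTheta₂_term n (s : ℂ) τ)
      (volume.restrict (Set.Ioc (0:ℝ) 1)) := by
    intro n
    apply Continuous.aestronglyMeasurable
    unfold jacobiTheta₂_term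
    fun_prop
  have hnorm : ∀ (n : ℤ) (s : ℝ), ‖jacobiTheta₂_term n (s : ℂ) τ‖ = rexp (-π * n ^ 2 * τ.im) := by
    intro n s
    rw [norm_jacobiTheta₂_term]
    simp
  have hsummable : Summable (fun n : ℤ => rexp (-π * n ^ 2 * τ.im)) := by
    have h0 := (summable_jacobiTheta₂_term_iff 0 τ).mpr hτ
    rw [← summable_norm_iff] at h0
    refine h0.congr fun n => ?_
    rw [norm_jacobiTheta₂_term]
    simp
  have hlint : ∀ n : ℤ, ∫⁻ s, ‖jacobiTheta₂_term n (s : ℂ) τ‖₊ ∂(volume.restrict (Set.Ioc (0:ℝ) 1))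
      = ENNReal.ofReal (rexp (-π * n ^ 2 * τ.im)) := by
    intro n
    have h1 : ∀ s : ℝ, (‖jacobiTheta₂_term n (s : ℂ) τ‖₊ : ENNReal)
        = ENNReal.ofReal (rexp (-π * n ^ 2 * τ.im)) := fun s => by
      rw [← enorm_eq_nnnorm, ← ofReal_norm, hnorm n s]
    simp_rw [h1]
    rw [lintegral_const, Measure.restrict_apply_univ, Real.volume_Ioc]
    norm_num
  have hinterch := MeasureTheory.integral_tsum (μ := volume.restrict (Set.Ioc (0:ℝ) 1)) hmeas ?_
  · have hfun : ∀ s : ℝ, jacobiTheta₂ (s : ℂ) τ = ∑' n : ℤ, jacobiTheta₂_term n (s : ℂ) τ :=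
      fun s => rfl
    simp_rw [hfun]
    rw [hinterch]
    rw [tsum_eq_single 0]
    · have : ∀ s : ℝ, jacobiTheta₂_term 0 (s : ℂ) τ = 1 := by
        intro s; rw [jacobiTheta₂_term]; norm_num
      simp_rw [this]
      rw [setIntegral_const, Real.volume_real_Ioc]
      norm_num
    · intro n hn
      have hterm : ∀ s : ℝ, jacobiTheta₂_term n (s : ℂ) τ
          = Complex.exp ((2 * π * Complex.I * n) * (s : ℂ)) *
            Complex.exp (π * Complex.I * n ^ 2 * τ) := by
        intro s; rw [jacobiTheta₂_term, ← Complex.exp_add]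
      simp_rw [hterm]
      rw [MeasureTheory.integral_mul_const,
        ← intervalIntegral.integral_of_le (by norm_num : (0:ℝ) ≤ 1)]
      have hc : (2 * π * Complex.I * n : ℂ) ≠ 0 := by
        simp [Real.pi_ne_zero, Complex.I_ne_zero, hn]
      rw [integral_exp_mul_complex hc]
      have h1 : Complex.exp (2 * π * Complex.I * n * (1:ℝ)) = 1 := by
        rw [show (2 * π * Complex.I * n * (1:ℝ) : ℂ) = n * (2 * π * Complex.I) by push_cast; ring]
        exact Complex.exp_int_mul_two_pi_mul_I n
      have h0 : Complex.exp (2 * π * Complex.I * n * (0:ℝ)) = 1 := by norm_num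
      rw [h1, h0]
      simp
  · have hlint' : ∀ n : ℤ, ∫⁻ s, ‖jacobiTheta₂_term n (s : ℂ) τ‖ₑ ∂(volume.restrict (Set.Ioc (0:ℝ) 1))
        = ENNReal.ofReal (rexp (-π * n ^ 2 * τ.im)) := hlint
    simp_rw [hlint']
    rw [← ENNReal.ofReal_tsum_of_nonneg (fun n => (Real.exp_pos _).le) hsummable]
    exact ENNReal.ofReal_ne_top

lemma jacobiTheta₂_exists_ne_zero {τ : ℂ} (hτ : 0 < τ.im) : ∃ u : ℂ, jacobiTheta₂ u τ ≠ 0 := by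
  by_contra h
  push_neg at h
  have := jacobiTheta₂_integral hτ
  simp_rw [h] at this
  simp at this

lemma continuous_jacobiTheta₂_left {τ : ℂ} (hτ : 0 < τ.im) :
    Continuous (fun z : ℂ => jacobiTheta₂ z τ) := by
  rw [continuous_iff_continuousAt]
  intro z
  have : ContinuousAt ((fun p : ℂ × ℂ => jacobiTheta₂ p.1 p.2) ∘ fun x : ℂ => (x, τ)) z :=
    ContinuousAt.comp (f := fun x : ℂ => (x, τ)) (x := z) (continuousAt_jacobiTheta₂ z hτ)
      (continuousAt_id.prodMk continuousAt_const)
  exact this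

lemma differentiable_jacobiTheta₂_left {τ : ℂ} (hτ : 0 < τ.im) :
    Differentiable ℂ (fun z : ℂ => jacobiTheta₂ z τ) :=
  fun z => differentiableAt_jacobiTheta₂_fst z hτ

lemma entire_eq_zero {f : ℂ → ℂ} (hf : Differentiable ℂ f) {x₀ : ℂ}
    (h : ∀ᶠ x in nhds x₀, f x = 0) : ∀ x, f x = 0 := by
  have ha : AnalyticOnNhd ℂ f Set.univ :=
    hf.differentiableOn.analyticOnNhd isOpen_univ
  have := ha.eqOn_zero_of_preconnected_of_eventuallyEq_zero isPreconnected_univ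
    (Set.mem_univ x₀) h
  intro x
  exact this (Set.mem_univ x)

lemma jacobiTheta₂_dense_ne_zero {τ : ℂ} (hτ : 0 < τ.im) :
    Dense {u : ℂ | jacobiTheta₂ u τ ≠ 0} := by
  rw [dense_iff_inter_open]
  rintro U hU ⟨u₀, hu₀⟩
  by_contra h
  rw [Set.not_nonempty_iff_eq_empty] at h
  have hzero : ∀ᶠ x in nhds u₀, jacobiTheta₂ x τ = 0 := by
    filter_upwards [hU.mem_nhds hu₀] with x hx
    by_contra hne
    exact Set.eq_empty_iff_forall_notMem.mp h x ⟨hx, hne⟩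
  obtain ⟨u, hu⟩ := jacobiTheta₂_exists_ne_zero hτ
  exact hu (entire_eq_zero (differentiable_jacobiTheta₂_left hτ) hzero u)

lemma dense_preimage_homeomorph {α β : Type*} [TopologicalSpace α] [TopologicalSpace β]
    (h : α ≃ₜ β) {s : Set β} (hs : Dense s) : Dense (h ⁻¹' s) := by
  rw [dense_iff_closure_eq, ← Homeomorph.preimage_closure, hs.closure_eq, Set.preimage_univ]

lemma theta1_eq' (u τ : ℂ) : theta1 u τ =
    Complex.exp (↑π * I * (1/4) * τ + ↑π * I * (u + 1/2)) *
      jacobiTheta₂ (u + (1/2 + τ/2)) τ := by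
  rw [theta1, thetaChar_eq_jacobiTheta₂]
  have h1 : (π:ℂ) * I * ((1/2:ℝ):ℂ)^2 * τ + 2 * π * I * ((1/2:ℝ):ℂ) * (u + ((1/2:ℝ):ℂ))
      = ↑π * I * (1/4) * τ + ↑π * I * (u + 1/2) := by push_cast; ring
  have h2 : u + ((1/2:ℝ):ℂ) + ((1/2:ℝ):ℂ) * τ = u + (1/2 + τ/2) := by push_cast; ring
  rw [h1, h2]

lemma continuous_theta1 {τ : ℂ} (hτ : 0 < τ.im) : Continuous fun u : ℂ => theta1 u τ := by
  simp_rw [theta1_eq']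
  exact (Complex.continuous_exp.comp (by fun_prop)).mul
    ((continuous_jacobiTheta₂_left hτ).comp (by fun_prop))

lemma theta1_isOpen {τ : ℂ} (hτ : 0 < τ.im) : IsOpen {u : ℂ | theta1 u τ ≠ 0} :=
  isOpen_compl_singleton.preimage (continuous_theta1 hτ)

lemma theta1_dense {τ : ℂ} (hτ : 0 < τ.im) : Dense {u : ℂ | theta1 u τ ≠ 0} := by
  have : {u : ℂ | theta1 u τ ≠ 0}
      = (Homeomorph.addRight (1/2 + τ/2)) ⁻¹' {v : ℂ | jacobiTheta₂ v τ ≠ 0} := by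
    ext u
    simp only [Set.mem_setOf_eq, Set.mem_preimage]
    rw [theta1_eq']
    simp [Complex.exp_ne_zero]
  rw [this]
  exact dense_preimage_homeomorph _ (jacobiTheta₂_dense_ne_zero hτ)

/-- Simultaneous non-vanishing of finitely many affine evaluations of `θ₁`. -/
lemma exists_good_point {τ : ℂ} (hτ : 0 < τ.im) {ι : Type*} [Finite ι] (a c : ι → ℂ)
    (ha : ∀ i, a i ≠ 0) : ∃ x : ℂ, ∀ i, theta1 (a i * x + c i) τ ≠ 0 := by
  have : Countable ι := Finite.to_countable
  set S : ι → Set ℂ := fun i =>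
    ((Homeomorph.mulLeft₀ (a i) (ha i)).trans (Homeomorph.addRight (c i)))
      ⁻¹' {u : ℂ | theta1 u τ ≠ 0} with hS
  have hopen : ∀ i, IsOpen (S i) := fun i =>
    (theta1_isOpen hτ).preimage (Homeomorph.continuous _)
  have hdense : ∀ i, Dense (S i) := fun i =>
    dense_preimage_homeomorph _ (theta1_dense hτ)
  obtain ⟨x, hx⟩ := (dense_iInter_of_isOpen hopen hdense).nonempty
  exact ⟨x, fun i => Set.mem_iInter.mp hx i⟩

lemma thetaChar_add_one (a : ℝ) (x τ : ℂ) :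
    thetaChar a 0 (x + 1) τ = Complex.exp (2 * π * I * a) * thetaChar a 0 x τ := by
  rw [thetaChar_eq_jacobiTheta₂, thetaChar_eq_jacobiTheta₂]
  have h2 : x + 1 + ((0:ℝ):ℂ) + a * τ = (x + ((0:ℝ):ℂ) + a * τ) + 1 := by ring
  rw [h2, jacobiTheta₂_add_left, ← mul_assoc, ← Complex.exp_add]
  congr 2
  push_cast
  ring

lemma thetaChar_add_nat (a : ℝ) (x τ : ℂ) (k : ℕ) :
    thetaChar a 0 (x + k) τ = (Complex.exp (2 * π * I * a))^k * thetaChar a 0 x τ := by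
  induction k with
  | zero => simp
  | succ k ih =>
      have h : x + ((k:ℕ)+1 : ℕ) = (x + k) + 1 := by push_cast; ring
      rw [h, thetaChar_add_one, ih, pow_succ]
      ring

lemma differentiable_thetaChar (a : ℝ) {τ : ℂ} (hτ : 0 < τ.im) :
    Differentiable ℂ (fun x => thetaChar a 0 x τ) := by
  simp_rw [thetaChar_eq_jacobiTheta₂]
  apply Differentiable.mul
  · apply Complex.differentiable_exp.comp
    fun_prop
  · exact (differentiable_jacobiTheta₂_left hτ).comp (by fun_prop)

lemma thetaChar_exists_ne_zero (a : ℝ) {τ : ℂ} (hτ : 0 < τ.im) :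
    ∃ x : ℂ, thetaChar a 0 x τ ≠ 0 := by
  obtain ⟨u, hu⟩ := jacobiTheta₂_exists_ne_zero hτ
  refine ⟨u - a * τ, ?_⟩
  rw [thetaChar_eq_jacobiTheta₂]
  have h : u - (a:ℂ) * τ + ((0:ℝ):ℂ) + (a:ℂ) * τ = u := by push_cast; ring
  rw [h]
  exact mul_ne_zero (Complex.exp_ne_zero _) hu

/-- Orthogonality of roots of unity. -/
lemma root_sum {b : ℕ} (hb : 1 ≤ b) (l l₀ : Fin b) :
    ∑ j ∈ Finset.range b, (Complex.exp (2 * π * I * (((l:ℕ):ℂ)/(b:ℂ))))^j *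
      (Complex.exp (-(2 * π * I * (((l₀:ℕ):ℂ)/(b:ℂ)))))^j
      = if l = l₀ then (b:ℂ) else 0 := by
  have hbC : (b:ℂ) ≠ 0 := Nat.cast_ne_zero.mpr (by omega)
  have hbase : Complex.exp (2 * π * I * (((l:ℕ):ℂ)/(b:ℂ))) *
      Complex.exp (-(2 * π * I * (((l₀:ℕ):ℂ)/(b:ℂ))))
      = Complex.exp (((((l:ℕ):ℤ) - ((l₀:ℕ):ℤ) : ℤ):ℂ) * (2 * π * I) / b) := by
    rw [← Complex.exp_add]
    congr 1
    push_cast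
    ring
  simp_rw [← mul_pow, hbase]
  by_cases h : l = l₀
  · subst h
    rw [if_pos rfl]
    simp
  · rw [if_neg h]
    set d : ℤ := ((l:ℕ):ℤ) - ((l₀:ℕ):ℤ) with hd
    have hd0 : d ≠ 0 := by
      intro h0
      apply h
      apply Fin.ext
      omega
    have hdlt : d.natAbs < b := by
      have := l.isLt; have := l₀.isLt
      omega
    have h2πI : (2 * (π:ℂ) * I) ≠ 0 := by
      simp [Real.pi_ne_zero, Complex.I_ne_zero]
    have hq1 : Complex.exp ((d:ℂ) * (2 * π * I) / b) ≠ 1 := by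
      intro h1
      rw [Complex.exp_eq_one_iff] at h1
      obtain ⟨k, hk⟩ := h1
      have h3 : (d:ℂ) = k * b := by
        have h4 : (d:ℂ) * (2 * π * I) = (k * b) * (2 * π * I) := by
          field_simp at hk
          linear_combination (2 * π * I) * hk
        exact mul_right_cancel₀ h2πI h4
      have hZ : d = k * b := by exact_mod_cast h3
      have hna : d.natAbs = k.natAbs * b := by
        rw [hZ, Int.natAbs_mul, Int.natAbs_natCast]
      have hk0 : k.natAbs ≠ 0 := by
        intro h5
        apply hd0
        rw [hZ, Int.natAbs_eq_zero.mp h5, zero_mul]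
      have : b ≤ k.natAbs * b := Nat.le_mul_of_pos_left b (Nat.pos_of_ne_zero hk0)
      omega
    have hqb : Complex.exp ((d:ℂ) * (2 * π * I) / b) ^ b = 1 := by
      rw [← Complex.exp_nat_mul]
      have : (b:ℂ) * ((d:ℂ) * (2 * π * I) / b) = (d:ℂ) * (2 * π * I) := by
        field_simp
      rw [this]
      exact Complex.exp_int_mul_two_pi_mul_I d
    rw [geom_sum_eq hq1, hqb, sub_self, zero_div]

end Auxiliary

/-- For a fixed quasihole configuration `w`, the `b` genus-one Laughlin sections
`z ↦ S_l(z|w)`, `l = 0, …, b−1`, are linearly independent over `ℂ`. -/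
theorem laughlinS_linearIndependent (b n m : ℕ) (hb : 1 ≤ b) (hn : 1 ≤ n)
    (τ : ℂ) (hτ : 0 < τ.im) (w : Fin m → ℂ) :
    LinearIndependent ℂ
      (fun l : Fin b => (fun z : Fin n → ℂ => laughlinS b n m (l : ℕ) τ z w)) := by
  have hb0 : (b:ℂ) ≠ 0 := Nat.cast_ne_zero.mpr (by omega)
  have hτ' : 0 < ((b:ℂ) * τ).im := by
    have h1 : ((b:ℂ) * τ).im = (b:ℝ) * τ.im := by
      simp [Complex.mul_im]
    rw [h1]
    have : (0:ℝ) < (b:ℝ) := by exact_mod_cast Nat.lt_of_lt_of_le Nat.zero_lt_one hb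
    exact mul_pos this hτ
  rw [Fintype.linearIndependent_iff]
  intro c hc l₀
  have hz : ∀ z : Fin n → ℂ, ∑ l : Fin b, c l * laughlinS b n m (l:ℕ) τ z w = 0 := by
    intro z
    have := congrFun hc z
    simpa [Finset.sum_apply] using this
  set f : Fin b → ℂ → ℂ := fun l x => thetaChar (((l:ℕ):ℝ)/((b:ℕ):ℝ)) 0 x ((b:ℂ) * τ) with hf
  set P : (Fin n → ℂ) → ℂ := fun z =>
    (∏ μ : Fin n, ∏ ν ∈ Finset.Ioi μ, (theta1 (z μ - z ν) τ) ^ b) *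
    ∏ μ : Fin n, ∏ γ : Fin m, theta1 (z μ - w γ) τ with hP
  set X : (Fin n → ℂ) → ℂ := fun z => (b:ℂ) * ∑ μ, z μ + ∑ γ, w γ with hX
  have hls : ∀ (l : Fin b) (z : Fin n → ℂ),
      laughlinS b n m (l:ℕ) τ z w = f l (X z) * P z := by
    intro l z
    rw [laughlinS, hf, hP, hX, mul_assoc]
  have hz' : ∀ z, (∑ l : Fin b, c l * f l (X z)) * P z = 0 := by
    intro z
    rw [Finset.sum_mul, ← hz z]
    refine Finset.sum_congr rfl fun l _ => ?_
    rw [hls]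
    ring
  -- choose a good configuration z0
  obtain ⟨t, ht⟩ := exists_good_point (τ := τ) hτ (ι := {p : Fin n × Fin n // p.1 ≠ p.2})
      (fun p => ((p.1.1.val : ℂ) - (p.1.2.val : ℂ))) (fun _ => 0) (by
        rintro ⟨⟨μ, ν⟩, hne⟩
        simp only [sub_ne_zero]
        intro hcast
        apply hne
        apply Fin.ext
        exact_mod_cast hcast)
  obtain ⟨s, hs⟩ := exists_good_point (τ := τ) hτ (ι := Fin n × Fin m)
      (fun _ => 1) (fun p => (p.1.val : ℂ) * t - w p.2) (fun _ => one_ne_zero)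
  set z0 : Fin n → ℂ := fun μ => s + (μ.val : ℂ) * t with hz0
  have hpair : ∀ μ ν : Fin n, μ ≠ ν → theta1 (z0 μ - z0 ν) τ ≠ 0 := by
    intro μ ν hne
    have h := ht ⟨(μ, ν), hne⟩
    have harg : ((μ.val : ℂ) - (ν.val : ℂ)) * t + 0 = z0 μ - z0 ν := by
      rw [hz0]; ring
    rwa [harg] at h
  have hwfac : ∀ (μ : Fin n) (γ : Fin m), theta1 (z0 μ - w γ) τ ≠ 0 := by
    intro μ γ
    have h := hs (μ, γ)
    have harg : (1:ℂ) * s + ((μ.val : ℂ) * t - w γ) = z0 μ - w γ := by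
      rw [hz0]; ring
    rwa [harg] at h
  have hP0 : P z0 ≠ 0 := by
    rw [hP]
    apply mul_ne_zero
    · rw [Finset.prod_ne_zero_iff]
      intro μ _
      rw [Finset.prod_ne_zero_iff]
      intro ν hν
      exact pow_ne_zero _ (hpair μ ν (Finset.mem_Ioi.mp hν).ne)
    · rw [Finset.prod_ne_zero_iff]
      intro μ _
      rw [Finset.prod_ne_zero_iff]
      intro γ _
      exact hwfac μ γ
  -- local vanishing of g around X z0
  set g : ℂ → ℂ := fun x => ∑ l : Fin b, c l * f l x with hg
  set i0 : Fin n := ⟨0, by omega⟩ with hi0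
  set Zf : ℂ → (Fin n → ℂ) := fun ζ => Function.update z0 i0 (z0 i0 + ζ) with hZf
  have hupd : ∀ (ζ : ℂ) (μ : Fin n), Zf ζ μ = z0 μ + if μ = i0 then ζ else 0 := by
    intro ζ μ
    rw [hZf]
    by_cases hμ : μ = i0
    · subst hμ; simp
    · simp [Function.update_of_ne hμ, hμ]
  have hXZ : ∀ ζ, X (Zf ζ) = X z0 + (b:ℂ) * ζ := by
    intro ζ
    rw [hX]
    simp only
    have h1 : ∑ μ, Zf ζ μ = (∑ μ, z0 μ) + ζ := by
      simp_rw [hupd ζ]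
      rw [Finset.sum_add_distrib, Finset.sum_ite_eq' Finset.univ i0 (fun _ => ζ)]
      simp
    rw [h1]
    ring
  have hZ0 : Zf 0 = z0 := by
    funext μ
    rw [hupd 0 μ]
    simp
  have hPcont : Continuous fun ζ => P (Zf ζ) := by
    have hcoord : ∀ μ : Fin n, Continuous fun ζ => Zf ζ μ := by
      intro μ
      by_cases hμ : μ = i0
      · simp_rw [hupd _ μ, if_pos hμ]
        fun_prop
      · simp_rw [hupd _ μ, if_neg hμ]
        fun_prop
    rw [hP]
    apply Continuous.mul
    · apply continuous_finset_prod
      intro μ _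
      apply continuous_finset_prod
      intro ν _
      exact ((continuous_theta1 hτ).comp ((hcoord μ).sub (hcoord ν))).pow b
    · apply continuous_finset_prod
      intro μ _
      apply continuous_finset_prod
      intro γ _
      exact (continuous_theta1 hτ).comp ((hcoord μ).sub continuous_const)
  have hev : ∀ᶠ ζ in nhds (0:ℂ), g (X z0 + (b:ℂ) * ζ) = 0 := by
    have hne : ∀ᶠ ζ in nhds (0:ℂ), P (Zf ζ) ≠ 0 := by
      have := (hPcont.continuousAt (x := 0)).eventually_ne (by rwa [hZ0])
      exact this
    filter_upwards [hne] with ζ hζ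
    have h := hz' (Zf ζ)
    rw [hXZ ζ] at h
    rcases mul_eq_zero.mp h with h' | h'
    · exact h'
    · exact absurd h' hζ
  have hgev : ∀ᶠ x in nhds (X z0), g x = 0 := by
    have htend : Filter.Tendsto (fun x : ℂ => (x - X z0)/(b:ℂ)) (nhds (X z0)) (nhds 0) := by
      have hcont : Continuous fun x : ℂ => (x - X z0)/(b:ℂ) := by fun_prop
      have := hcont.tendsto (X z0)
      simpa using this
    filter_upwards [htend.eventually hev] with x hx
    have h : X z0 + (b:ℂ) * ((x - X z0)/(b:ℂ)) = x := by field_simp; ring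
    rwa [h] at hx
  have hgdiff : Differentiable ℂ g := by
    rw [hg]
    apply Differentiable.fun_sum
    intro l _
    exact (differentiable_const (c l)).mul (differentiable_thetaChar _ hτ')
  have hg0 : ∀ x, g x = 0 := entire_eq_zero hgdiff hgev
  -- extract the coefficient via roots of unity
  set ε : Fin b → ℂ := fun l => Complex.exp (2 * Real.pi * I * (((l:ℕ):ℂ)/((b:ℕ):ℂ))) with hε
  have hshift : ∀ (l : Fin b) (x : ℂ) (k : ℕ), f l (x + k) = (ε l)^k * f l x := by
    intro l x k
    rw [hf, hε]
    simp only
    rw [thetaChar_add_nat]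
    congr 3
    push_cast
    ring
  have key : ∀ x : ℂ, (c l₀ * f l₀ x) * (b:ℂ) = 0 := by
    intro x
    have h1 : ∀ j : ℕ, ∑ l : Fin b, c l * ((ε l)^j * f l x) = 0 := by
      intro j
      calc ∑ l : Fin b, c l * ((ε l)^j * f l x)
          = ∑ l : Fin b, c l * f l (x + (j:ℕ)) := by
            refine Finset.sum_congr rfl fun l _ => by rw [hshift]
        _ = 0 := hg0 (x + (j:ℕ))
    set δ : ℂ := Complex.exp (-(2 * Real.pi * I * (((l₀:ℕ):ℂ)/((b:ℕ):ℂ)))) with hδ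
    have h2 : ∑ j ∈ Finset.range b, δ^j * (∑ l : Fin b, c l * ((ε l)^j * f l x)) = 0 := by
      simp_rw [h1, mul_zero, Finset.sum_const_zero]
    have h3 : ∑ l : Fin b, (c l * f l x) * (∑ j ∈ Finset.range b, (ε l)^j * δ^j) = 0 := by
      calc ∑ l : Fin b, (c l * f l x) * (∑ j ∈ Finset.range b, (ε l)^j * δ^j)
          = ∑ l : Fin b, ∑ j ∈ Finset.range b, δ^j * (c l * ((ε l)^j * f l x)) := by
            refine Finset.sum_congr rfl fun l _ => ?_
            rw [Finset.mul_sum]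
            exact Finset.sum_congr rfl fun j _ => by ring
        _ = ∑ j ∈ Finset.range b, ∑ l : Fin b, δ^j * (c l * ((ε l)^j * f l x)) :=
            Finset.sum_comm
        _ = ∑ j ∈ Finset.range b, δ^j * (∑ l : Fin b, c l * ((ε l)^j * f l x)) := by
            refine Finset.sum_congr rfl fun j _ => ?_
            rw [Finset.mul_sum]
        _ = 0 := h2
    have h4 : ∀ l : Fin b, (∑ j ∈ Finset.range b, (ε l)^j * δ^j)
        = if l = l₀ then (b:ℂ) else 0 := by
      intro l
      rw [hε, hδ]
      exact root_sum hb l l₀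
    rw [Finset.sum_congr rfl (fun l _ => by rw [h4 l])] at h3
    simp_rw [mul_ite, mul_zero] at h3
    rwa [Finset.sum_ite_eq' Finset.univ l₀ (fun l => c l * f l x * (b:ℂ)),
      if_pos (Finset.mem_univ l₀)] at h3
  obtain ⟨x, hx⟩ := thetaChar_exists_ne_zero (((l₀:ℕ):ℝ)/((b:ℕ):ℝ)) hτ'
  have hkey := key x
  rcases mul_eq_zero.mp hkey with h' | h'
  · rcases mul_eq_zero.mp h' with h'' | h''
    · exact h''
    · exact absurd h'' hx
  · exact absurd h' hb0
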